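/- Midpoint-rule error bound for the Gaussian density: let φ(x) = (2π)^{−1/2} e^{−x²/2}. For any h > 0, b ≥ 0, and positive integer j₀, | h·Σ_{i=0}^{j₀} φ(b+ih) − ∫_{b−h/2}^{b+(j₀+1/2)h} φ(x) dx | ≤ (h²/12)·[ ∫_{b−h/2}^{b+j₀h+h/2} |φ''(x)| dx + (4+h)·max{|φ''(x)| : b−h/2 < x < b+j₀h+h/2} ]. -/

import Mathlib

/-!
On a cell of width `2δ` the midpoint rule has a Peano kernel bounded by `δ² / 2`, so summing
over the `j₀ + 1` cells bounds the error by `(h² / 8) ∫ |φ''|`. It then suffices that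
`∫ |φ''| ≤ 8 sup |φ''|` on every interval `[ℓ, r]`. This is clear if `r - ℓ ≤ 8`. Otherwise, by
the symmetry of `φ`, we may take `ℓ + r ≥ 0`. If `ℓ ≥ 3/2` then `φ'' ≥ 0` on `[ℓ, r]` and
`∫ |φ''| = ℓφ(ℓ) - rφ(r) ≤ ℓφ(ℓ) ≤ 8φ''(ℓ)`; if not, `3/2 ∈ [ℓ, r]` and
`∫ |φ''| ≤ 5φ(1) ≤ 10φ(3/2) = 8φ''(3/2)`.
-/

open Real

/-- The standard normal density. -/
noncomputable def stdGauss (x : ℝ) : ℝ := (Real.sqrt (2 * π))⁻¹ * Real.exp (-x ^ 2 / 2)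

/-- Its second derivative `φ''(x) = (x² − 1)φ(x)`. -/
noncomputable def stdGauss'' (x : ℝ) : ℝ := (x ^ 2 - 1) * stdGauss x

open MeasureTheory Set intervalIntegral

theorem abs_integral_mul_le_mul_integral_abs {g k : ℝ → ℝ} {a b M : ℝ} (hab : a ≤ b)
    (hg : Continuous g) (hk : Continuous k) (hkM : ∀ t ∈ Icc a b, |k t| ≤ M) :
    |∫ t in a..b, g t * k t| ≤ M * ∫ t in a..b, |g t| :=
  calc |∫ t in a..b, g t * k t|
      ≤ ∫ t in a..b, |g t| * |k t| := by
        simpa only [abs_mul] using abs_integral_le_integral_abs (f := fun t => g t * k t) hab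
    _ ≤ ∫ t in a..b, |g t| * M :=
        integral_mono_on hab ((hg.abs.mul hk.abs).intervalIntegrable _ _)
          ((hg.abs.mul continuous_const).intervalIntegrable _ _)
          fun t ht => mul_le_mul_of_nonneg_left (hkM t ht) (abs_nonneg _)
    _ = M * ∫ t in a..b, |g t| := by rw [intervalIntegral.integral_mul_const, mul_comm]

section Midpoint

variable {f f' f'' : ℝ → ℝ}

theorem integral_eq_taylor_integral_remainder (hf : ∀ x, HasDerivAt f (f' x) x)
    (hf' : ∀ x, HasDerivAt f' (f'' x) x) (hf'' : Continuous f'') (a c : ℝ) :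
    ∫ x in a..c, f x
      = f c * (c - a) - f' c * ((c - a) ^ 2 / 2) + ∫ t in a..c, f'' t * ((t - a) ^ 2 / 2) := by
  have hfc : Continuous f := continuous_iff_continuousAt.2 fun x => (hf x).continuousAt
  have hF : ∀ t ∈ uIcc a c, HasDerivAt
      (fun u => f' u * ((u - a) ^ 2 / 2) - f u * (u - a) + ∫ x in a..u, f x)
      (f'' t * ((t - a) ^ 2 / 2)) t := by
    intro t _
    have hsq : HasDerivAt (fun u : ℝ => (u - a) ^ 2 / 2) (t - a) t := by
      simpa using (((hasDerivAt_id t).sub_const a).pow 2).div_const 2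
    exact ((((hf' t).mul hsq).sub ((hf t).mul ((hasDerivAt_id' t).sub_const a))).add
      (hfc.integral_hasStrictDerivAt a t).hasDerivAt).congr_deriv (by ring)
  rw [integral_eq_sub_of_hasDerivAt hF ((hf''.mul (by fun_prop)).intervalIntegrable _ _)]
  simp only [sub_self, integral_same]
  ring

theorem abs_two_mul_sub_integral_le (hf : ∀ x, HasDerivAt f (f' x) x)
    (hf' : ∀ x, HasDerivAt f' (f'' x) x) (hf'' : Continuous f'') (c : ℝ) {δ : ℝ}
    (hδ : 0 ≤ δ) :
    |2 * δ * f c - ∫ x in (c - δ)..(c + δ), f x|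
      ≤ δ ^ 2 / 2 * ∫ x in (c - δ)..(c + δ), |f'' x| := by
  have hfc : Continuous f := continuous_iff_continuousAt.2 fun x => (hf x).continuousAt
  have hleft := integral_eq_taylor_integral_remainder hf hf' hf'' (c - δ) c
  have hright := integral_eq_taylor_integral_remainder hf hf' hf'' (c + δ) c
  have hkernel_left : |∫ t in (c - δ)..c, f'' t * ((t - (c - δ)) ^ 2 / 2)|
      ≤ δ ^ 2 / 2 * ∫ t in (c - δ)..c, |f'' t| := by
    refine abs_integral_mul_le_mul_integral_abs (by linarith) hf'' (by fun_prop) fun t ht => ?_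
    rw [abs_of_nonneg (by positivity)]
    nlinarith [ht.1, ht.2]
  have hkernel_right : |∫ t in (c + δ)..c, f'' t * ((t - (c + δ)) ^ 2 / 2)|
      ≤ δ ^ 2 / 2 * ∫ t in c..(c + δ), |f'' t| := by
    rw [integral_symm, abs_neg]
    refine abs_integral_mul_le_mul_integral_abs (by linarith) hf'' (by fun_prop) fun t ht => ?_
    rw [abs_of_nonneg (by positivity)]
    nlinarith [ht.1, ht.2]
  rw [← integral_add_adjacent_intervals (b := c) (hfc.intervalIntegrable _ _)
      (hfc.intervalIntegrable _ _), integral_symm (c + δ) c, hleft, hright,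
    ← integral_add_adjacent_intervals (b := c) (hf''.abs.intervalIntegrable _ _)
      (hf''.abs.intervalIntegrable _ _)]
  calc _ = |-(∫ t in (c - δ)..c, f'' t * ((t - (c - δ)) ^ 2 / 2))
            + ∫ t in (c + δ)..c, f'' t * ((t - (c + δ)) ^ 2 / 2)| := by
        congr 1
        ring
    _ ≤ _ := (abs_add_le _ _).trans (by rw [abs_neg, mul_add]; gcongr)

theorem abs_midpoint_sum_sub_integral_le (hf : ∀ x, HasDerivAt f (f' x) x)
    (hf' : ∀ x, HasDerivAt f' (f'' x) x) (hf'' : Continuous f'') (b : ℝ) {h : ℝ} (hh : 0 ≤ h)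
    (n : ℕ) :
    |h * ∑ i ∈ Finset.range n, f (b + i * h) - ∫ x in (b - h / 2)..(b + n * h - h / 2), f x|
      ≤ h ^ 2 / 8 * ∫ x in (b - h / 2)..(b + n * h - h / 2), |f'' x| := by
  have hfc : Continuous f := continuous_iff_continuousAt.2 fun x => (hf x).continuousAt
  induction n with
  | zero => simp
  | succ n ih =>
    have hcell :=
      abs_two_mul_sub_integral_le hf hf' hf'' (b + n * h) (by positivity : 0 ≤ h / 2)
    have hend : b + ((n + 1 : ℕ) : ℝ) * h - h / 2 = b + n * h + h / 2 := by push_cast; ring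
    rw [hend, Finset.sum_range_succ,
      ← integral_add_adjacent_intervals (b := b + n * h - h / 2) (hfc.intervalIntegrable _ _)
        (hfc.intervalIntegrable _ _),
      ← integral_add_adjacent_intervals (b := b + n * h - h / 2)
        (hf''.abs.intervalIntegrable _ _) (hf''.abs.intervalIntegrable _ _)]
    calc _ = |(h * ∑ i ∈ Finset.range n, f (b + i * h)
              - ∫ x in (b - h / 2)..(b + n * h - h / 2), f x)
            + (2 * (h / 2) * f (b + n * h)
              - ∫ x in (b + n * h - h / 2)..(b + n * h + h / 2), f x)| := by
          congr 1
          ring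
      _ ≤ _ := (abs_add_le _ _).trans (add_le_add ih hcell)
      _ = _ := by ring

end Midpoint

theorem integral_le_integral_of_eq_zero_outside {g : ℝ → ℝ} {ℓ r c d : ℝ} (hg : Continuous g)
    (hg0 : ∀ x, 0 ≤ g x) (hcd : c ≤ d) (hgcd : ∀ x ∉ Icc c d, g x = 0) (hlr : ℓ ≤ r) :
    ∫ x in ℓ..r, g x ≤ ∫ x in c..d, g x := by
  have hint : Integrable g := hg.integrable_of_hasCompactSupport (.intro isCompact_Icc hgcd)
  rw [integral_of_le hlr, integral_of_le hcd, ← integral_Icc_eq_integral_Ioc,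
    ← integral_Icc_eq_integral_Ioc, setIntegral_eq_integral_of_forall_compl_eq_zero hgcd]
  exact setIntegral_le_integral hint (.of_forall hg0)

theorem stdGauss_pos (x : ℝ) : 0 < stdGauss x := by
  unfold stdGauss
  positivity

theorem stdGauss_neg (x : ℝ) : stdGauss (-x) = stdGauss x := by
  simp [stdGauss]

theorem stdGauss''_neg (x : ℝ) : stdGauss'' (-x) = stdGauss'' x := by
  simp [stdGauss'', stdGauss_neg]

@[fun_prop]
theorem continuous_stdGauss : Continuous stdGauss := by
  unfold stdGauss
  fun_prop

@[fun_prop]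
theorem continuous_stdGauss'' : Continuous stdGauss'' := by
  unfold stdGauss''
  fun_prop

theorem hasDerivAt_stdGauss (x : ℝ) : HasDerivAt stdGauss (-x * stdGauss x) x := by
  have hexp : HasDerivAt (fun y : ℝ => -y ^ 2 / 2) (-x) x :=
    ((hasDerivAt_pow 2 x).neg.div_const 2).congr_deriv (by ring)
  exact (hexp.exp.const_mul _).congr_deriv (by unfold stdGauss; ring)

theorem hasDerivAt_neg_mul_stdGauss (x : ℝ) :
    HasDerivAt (fun y => -y * stdGauss y) (stdGauss'' x) x :=
  ((hasDerivAt_neg' x).mul (hasDerivAt_stdGauss x)).congr_deriv (by unfold stdGauss''; ring)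

theorem hasDerivAt_mul_stdGauss (x : ℝ) :
    HasDerivAt (fun y => y * stdGauss y) ((1 - x ^ 2) * stdGauss x) x :=
  ((hasDerivAt_id' x).mul (hasDerivAt_stdGauss x)).congr_deriv (by ring)

theorem integral_stdGauss'' (ℓ r : ℝ) :
    ∫ x in ℓ..r, stdGauss'' x = ℓ * stdGauss ℓ - r * stdGauss r := by
  rw [integral_eq_sub_of_hasDerivAt (fun x _ => hasDerivAt_neg_mul_stdGauss x)
    (continuous_stdGauss''.intervalIntegrable _ _)]
  ring

theorem mul_stdGauss_le (x : ℝ) : x * stdGauss x ≤ stdGauss 1 := by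
  rcases le_or_gt x 0 with hx | hx
  · nlinarith [stdGauss_pos x, stdGauss_pos 1]
  -- `x ≤ exp ((x² - 1) / 2)` because `1 + (x² - 1) / 2 - x = (x - 1)² / 2`
  have hx_le : x ≤ exp ((x ^ 2 - 1) / 2) := by
    nlinarith [add_one_le_exp ((x ^ 2 - 1) / 2), sq_nonneg (x - 1)]
  calc x * stdGauss x ≤ exp ((x ^ 2 - 1) / 2) * stdGauss x :=
        mul_le_mul_of_nonneg_right hx_le (stdGauss_pos x).le
    _ = stdGauss 1 := by
        unfold stdGauss
        rw [mul_left_comm, ← exp_add]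
        ring_nf

theorem stdGauss_one_le : stdGauss 1 ≤ 2 * stdGauss (3 / 2) := by
  have hexp : exp (5 / 8) ≤ 2 := by
    rw [← exp_log two_pos]
    exact exp_le_exp.2 (by linarith [log_two_gt_d9])
  calc stdGauss 1 = exp (5 / 8) * stdGauss (3 / 2) := by
        unfold stdGauss
        rw [mul_left_comm, ← exp_add]
        ring_nf
    _ ≤ 2 * stdGauss (3 / 2) := mul_le_mul_of_nonneg_right hexp (stdGauss_pos _).le

theorem abs_stdGauss''_eq (x : ℝ) :
    |stdGauss'' x| = stdGauss'' x + 2 * (max (1 - x ^ 2) 0 * stdGauss x) := by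
  unfold stdGauss''
  have hφ := stdGauss_pos x
  rcases le_total (x ^ 2) 1 with hx | hx
  · rw [abs_of_nonpos (by nlinarith), max_eq_left (by linarith)]
    ring
  · rw [abs_of_nonneg (by nlinarith), max_eq_right (by linarith)]
    ring

theorem integral_posPart_one_sub_sq_mul_stdGauss_le {ℓ r : ℝ} (hlr : ℓ ≤ r) :
    ∫ x in ℓ..r, max (1 - x ^ 2) 0 * stdGauss x ≤ 2 * stdGauss 1 := by
  calc ∫ x in ℓ..r, max (1 - x ^ 2) 0 * stdGauss x
      ≤ ∫ x in (-1)..1, max (1 - x ^ 2) 0 * stdGauss x := by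
        refine integral_le_integral_of_eq_zero_outside (by fun_prop)
          (fun x => mul_nonneg (le_max_right _ _) (stdGauss_pos x).le) (by norm_num)
          (fun x hx => ?_) hlr
        rw [mem_Icc, not_and_or, not_le, not_le] at hx
        rw [max_eq_right (by rcases hx with hx | hx <;> nlinarith), zero_mul]
    _ = ∫ x in (-1)..1, (1 - x ^ 2) * stdGauss x :=
        integral_congr fun x hx => by
          rw [uIcc_of_le (by norm_num), mem_Icc] at hx
          rw [max_eq_left (by nlinarith [hx.1, hx.2])]
    _ = 2 * stdGauss 1 := by
        rw [integral_eq_sub_of_hasDerivAt (fun x _ => hasDerivAt_mul_stdGauss x)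
          ((by fun_prop : Continuous fun x => (1 - x ^ 2) * stdGauss x).intervalIntegrable _ _),
          stdGauss_neg]
        ring

theorem integral_abs_stdGauss''_le_of_nonneg {ℓ r : ℝ} (hlr : ℓ ≤ r) (hr : 0 ≤ r) :
    ∫ x in ℓ..r, |stdGauss'' x| ≤ 5 * stdGauss 1 := by
  simp_rw [abs_stdGauss''_eq]
  have hcont : Continuous fun x => 2 * (max (1 - x ^ 2) 0 * stdGauss x) := by fun_prop
  rw [integral_add (continuous_stdGauss''.intervalIntegrable _ _) (hcont.intervalIntegrable _ _),
    intervalIntegral.integral_const_mul, integral_stdGauss'']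
  nlinarith [mul_stdGauss_le ℓ, stdGauss_pos r, integral_posPart_one_sub_sq_mul_stdGauss_le hlr]

theorem integral_abs_stdGauss''_of_one_le {ℓ r : ℝ} (hℓ : 1 ≤ ℓ) (hlr : ℓ ≤ r) :
    ∫ x in ℓ..r, |stdGauss'' x| = ℓ * stdGauss ℓ - r * stdGauss r := by
  rw [← integral_stdGauss'']
  refine integral_congr fun x hx => abs_of_nonneg ?_
  rw [uIcc_of_le hlr, mem_Icc] at hx
  exact mul_nonneg (by nlinarith [hx.1]) (stdGauss_pos x).le

theorem integral_abs_stdGauss''_le {ℓ r S : ℝ} (hlr : ℓ ≤ r)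
    (hS : ∀ x ∈ Icc ℓ r, |stdGauss'' x| ≤ S) :
    ∫ x in ℓ..r, |stdGauss'' x| ≤ 8 * S := by
  wlog hsym : 0 ≤ ℓ + r generalizing ℓ r
  · have hS' : ∀ x ∈ Icc (-r) (-ℓ), |stdGauss'' x| ≤ S := fun x hx => by
      rw [← stdGauss''_neg]
      exact hS (-x) ⟨by linarith [hx.2], by linarith [hx.1]⟩
    have := this (neg_le_neg hlr) hS' (by linarith)
    rwa [← integral_comp_neg, integral_congr fun x _ => by rw [stdGauss''_neg]] at this
  have hSℓ := hS ℓ (left_mem_Icc.2 hlr)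
  rcases le_or_gt (r - ℓ) 8 with hlen | hlen
  · have hbound : ‖∫ x in ℓ..r, |stdGauss'' x|‖ ≤ S * |r - ℓ| :=
      norm_integral_le_of_norm_le_const fun x hx => by
        rw [uIoc_of_le hlr] at hx
        simpa using hS x (Ioc_subset_Icc_self hx)
    rw [Real.norm_eq_abs, abs_of_nonneg (sub_nonneg.2 hlr)] at hbound
    nlinarith [le_abs_self (∫ x in ℓ..r, |stdGauss'' x|), abs_nonneg (stdGauss'' ℓ)]
  rcases le_or_gt (3 / 2) ℓ with hℓ | hℓ
  · have hφ := stdGauss_pos ℓ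
    rw [stdGauss'', abs_of_nonneg (mul_nonneg (by nlinarith) hφ.le)] at hSℓ
    rw [integral_abs_stdGauss''_of_one_le (by linarith) hlr]
    nlinarith [mul_le_mul_of_nonneg_right (show ℓ ≤ 8 * (ℓ ^ 2 - 1) by nlinarith) hφ.le,
      mul_pos (by linarith : 0 < r) (stdGauss_pos r)]
  · have hS32 := hS (3 / 2) ⟨hℓ.le, by linarith⟩
    rw [stdGauss'', abs_of_nonneg (by nlinarith [stdGauss_pos (3 / 2)])] at hS32
    nlinarith [integral_abs_stdGauss''_le_of_nonneg hlr (by linarith), stdGauss_one_le]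

theorem le_csSup_image_Ioo {g : ℝ → ℝ} (hg : Continuous g) {ℓ r x : ℝ} (hlr : ℓ < r)
    (hx : x ∈ Icc ℓ r) : g x ≤ sSup (g '' Ioo ℓ r) := by
  have hbdd : BddAbove (g '' Ioo ℓ r) :=
    (isCompact_Icc.image hg).bddAbove.mono (image_mono Ioo_subset_Icc_self)
  have hx_mem : g x ∈ closure (g '' Ioo ℓ r) :=
    hg.continuousWithinAt.mem_closure_image (by rwa [closure_Ioo hlr.ne])
  exact closure_minimal (fun _ hy => le_csSup hbdd hy) isClosed_Iic hx_mem

theorem gaussian_midpoint_rule_general (h b : ℝ) (hh : 0 < h)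
    (j₀ : ℕ) :
    |h * ∑ i ∈ Finset.range (j₀ + 1), stdGauss (b + i * h)
        - ∫ x in (b - h / 2)..(b + ((j₀ : ℝ) + 1 / 2) * h), stdGauss x|
      ≤ h ^ 2 / 12 * ((∫ x in (b - h / 2)..(b + (j₀ : ℝ) * h + h / 2), |stdGauss'' x|)
          + (4 + h) * sSup ((fun x => |stdGauss'' x|) ''
              Set.Ioo (b - h / 2) (b + (j₀ : ℝ) * h + h / 2))) := by
  have hmid := abs_midpoint_sum_sub_integral_le hasDerivAt_stdGauss hasDerivAt_neg_mul_stdGauss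
    continuous_stdGauss'' b hh.le (j₀ + 1)
  rw [show b + ((j₀ + 1 : ℕ) : ℝ) * h - h / 2 = b + j₀ * h + h / 2 by push_cast; ring] at hmid
  rw [show b + ((j₀ : ℝ) + 1 / 2) * h = b + j₀ * h + h / 2 by ring]
  have hlr : b - h / 2 < b + j₀ * h + h / 2 := by nlinarith [j₀.cast_nonneg (α := ℝ)]
  have hS := fun x (hx : x ∈ Icc _ _) => le_csSup_image_Ioo continuous_stdGauss''.abs hlr hx
  have hT := integral_abs_stdGauss''_le hlr.le hS
  have hS0 := (abs_nonneg _).trans (hS _ (left_mem_Icc.2 hlr.le))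
  refine hmid.trans ?_
  nlinarith [mul_nonneg (sq_nonneg h) (sub_nonneg.2 hT), mul_nonneg (pow_pos hh 3).le hS0]

/-- Midpoint-rule error bound for the Gaussian density: for `h > 0`, `b ≥ 0` and a
positive integer `j₀`,
`|h·Σ_{i=0}^{j₀} φ(b+ih) − ∫_{b−h/2}^{b+(j₀+1/2)h} φ| ≤
 (h²/12)·[∫_{b−h/2}^{b+j₀h+h/2} |φ''| + (4+h)·sup{|φ''(x)| : b−h/2 < x < b+j₀h+h/2}]`. -/
theorem gaussian_midpoint_rule (h b : ℝ) (hh : 0 < h) (hb : 0 ≤ b)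
    (j₀ : ℕ) (hj₀ : 0 < j₀) :
    |h * ∑ i ∈ Finset.range (j₀ + 1), stdGauss (b + i * h)
        - ∫ x in (b - h / 2)..(b + ((j₀ : ℝ) + 1 / 2) * h), stdGauss x|
      ≤ h ^ 2 / 12 * ((∫ x in (b - h / 2)..(b + (j₀ : ℝ) * h + h / 2), |stdGauss'' x|)
          + (4 + h) * sSup ((fun x => |stdGauss'' x|) ''
              Set.Ioo (b - h / 2) (b + (j₀ : ℝ) * h + h / 2))) :=
  gaussian_midpoint_rule_general h b hh j₀
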